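/- Ω' = 𝒢. That is: for every coherent sequence (ω_n)_n ∈ Ω, the termwise reduction (ω'_n)_n belongs to G and is locally eventually constant; and conversely, every locally eventually constant sequence (g_n)_n ∈ G equals (ω'_n)_n for some (ω_n)_n ∈ Ω. -/

import Mathlib

open Classical
noncomputable section

namespace GCG

/-- One-step backtrack reduction of a word: replace some substring `u v u` by `u`. -/
def ReduceStep {V : Type*} (l r : List V) : Prop :=
  ∃ (p s : List V) (u v : V), l = p ++ [u, v, u] ++ s ∧ r = p ++ [u] ++ s

/-- A word is reduced if it admits no one-step reduction. -/
def IsReduced {V : Type*} (l : List V) : Prop := ∀ r, ¬ ReduceStep l r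

/-- The reduction `ω'` of a word: the (for words in a simple graph, unique) reduced
word obtained from it by repeatedly replacing substrings `u v u` by `u`. -/
def reduce {V : Type*} (l : List V) : List V :=
  if h : ∃ r, Relation.ReflTransGen ReduceStep l r ∧ IsReduced r then h.choose else l

/-- Compress every maximal constant substring `u u ⋯ u` to the single letter `u`. -/
def compress {V : Type*} : List V → List V
  | [] => []
  | [a] => [a]
  | a :: b :: t => if a = b then compress (b :: t) else a :: compress (b :: t)

/-- Delete–Replace–Compress along `f`: delete the letters sent into `S`
(the subdivision points), replace the remaining letters by their images,
and compress maximal constant substrings. -/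
def DRC {V' V S : Type*} (f : V' → V ⊕ S) (w : List V') : List V :=
  compress (w.filterMap fun v => (f v).getLeft?)

/-- A word in a simple graph: a finite list of vertices in which consecutive
letters are distinct and joined by an edge. -/
def IsWord {V : Type*} (G : SimpleGraph V) (l : List V) : Prop := l.Chain' G.Adj

/-- A loop word at `x`: a word that starts and ends with `x`. -/
def IsLoopWord {V : Type*} (G : SimpleGraph V) (x : V) (l : List V) : Prop :=
  l.Chain' G.Adj ∧ l.head? = some x ∧ l.getLast? = some x

/-- Concatenation of loop words: the duplicated base letter is dropped. -/
def lconcat {V : Type*} (ω ξ : List V) : List V := ω.dropLast ++ ξ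

/-- `Gs` (on vertex set `V ⊕ S`) is the subdivision of `G` in which every edge is
evenly subdivided into `d` edges: every edge of `G` is replaced by a path of
length `d` through fresh interior vertices from `S`, these paths are compatible
with edge reversal, their interiors are pairwise disjoint, they exhaust `S`, and
their steps are exactly the edges of `Gs`. -/
def IsEvenSubdivision {V S : Type*} (G : SimpleGraph V) (d : ℕ)
    (Gs : SimpleGraph (V ⊕ S)) : Prop :=
  ∃ P : G.Dart → Fin (d + 1) → V ⊕ S,
    (∀ e, P e 0 = Sum.inl e.toProd.1) ∧
    (∀ e, P e (Fin.last d) = Sum.inl e.toProd.2) ∧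
    (∀ e (i : Fin (d + 1)), 0 < i.val → i.val < d → ∃ s : S, P e i = Sum.inr s) ∧
    (∀ e, Function.Injective (P e)) ∧
    (∀ e (i : Fin (d + 1)), P e.symm i = P e i.rev) ∧
    (∀ s : S, ∃ e i, P e i = Sum.inr s) ∧
    (∀ e e' (i i' : Fin (d + 1)), 0 < i.val → i.val < d → P e i = P e' i' →
      (e' = e ∧ i' = i) ∨ (e' = e.symm ∧ i' = i.rev)) ∧
    (∀ a b, Gs.Adj a b ↔ ∃ e, ∃ i : Fin d, P e i.castSucc = a ∧ P e i.succ = b)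

/-- The inverse sequence of finite connected simple graphs `X_n` with even
subdivisions `X*_n` and simplicial bonding surjections `f_n : X_{n+1} → X*_n`
mapping every edge onto an edge, together with coherent base vertices `x_n`. -/
structure GraphTower where
  V : ℕ → Type
  S : ℕ → Type
  finV : ∀ n, Finite (V n)
  G : ∀ n, SimpleGraph (V n)
  conn : ∀ n, (G n).Connected
  d : ℕ → ℕ
  two_le_d : ∀ n, 2 ≤ d n
  Gs : ∀ n, SimpleGraph (V n ⊕ S n)
  subdiv : ∀ n, IsEvenSubdivision (G n) (d n) (Gs n)
  f : ∀ n, V (n + 1) → V n ⊕ S n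
  f_surj : ∀ n, Function.Surjective (f n)
  f_simplicial : ∀ n ⦃u v⦄, (G (n + 1)).Adj u v → (Gs n).Adj (f n u) (f n v)
  f_edge_surj : ∀ n ⦃a b⦄, (Gs n).Adj a b →
    ∃ u v, (G (n + 1)).Adj u v ∧ f n u = a ∧ f n v = b
  x : ∀ n, V n
  f_base : ∀ n, f n (x (n + 1)) = Sum.inl (x n)

namespace GraphTower

/-- The projection `φ_n = DRC_n`. -/
def phi (T : GraphTower) (n : ℕ) : List (T.V (n + 1)) → List (T.V n) := DRC (T.f n)

/-- The composite projection `φ_n ∘ φ_{n+1} ∘ ⋯ ∘ φ_{n+m-1}` (the identity for `m = 0`). -/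
def proj (T : GraphTower) (n : ℕ) : (m : ℕ) → List (T.V (n + m)) → List (T.V n)
  | 0, w => w
  | m + 1, w => T.proj n m (T.phi (n + m) w)

/-- Membership in `Ω = lim←(Ω_n, φ_n)`: a coherent sequence of loop words. -/
def MemOmega (T : GraphTower) (ω : ∀ n, List (T.V n)) : Prop :=
  (∀ n, IsLoopWord (T.G n) (T.x n) (ω n)) ∧ ∀ n, T.phi n (ω (n + 1)) = ω n

/-- Membership in `G = lim←(Ω'_n, φ'_n)`: a `φ'`-coherent sequence of reduced loop words. -/
def MemG (T : GraphTower) (g : ∀ n, List (T.V n)) : Prop :=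
  (∀ n, IsLoopWord (T.G n) (T.x n) (g n) ∧ IsReduced (g n)) ∧
    ∀ n, reduce (T.phi n (g (n + 1))) = g n

/-- A sequence is locally eventually constant if for every fixed level `n` the
unreduced projections of its later terms to level `n` are eventually constant. -/
def LEC (T : GraphTower) (g : ∀ n, List (T.V n)) : Prop :=
  ∀ n, ∃ M, ∀ m, M ≤ m → T.proj n m (g (n + m)) = T.proj n M (g (n + M))

/-- `ω` is the stabilization `←g` of `g`: for every level `n`, the projections of
the later terms of `g` to level `n` eventually equal `ω n`. -/
def IsStabilization (T : GraphTower) (g ω : ∀ n, List (T.V n)) : Prop :=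
  ∀ n, ∃ M, ∀ m, M ≤ m → T.proj n m (g (n + m)) = ω n

/-- The identity word sequence `(x_n)_n`. -/
def seqOne (T : GraphTower) : ∀ n, List (T.V n) := fun n => [T.x n]

/-- Termwise concatenation followed by termwise reduction. -/
def seqMul (T : GraphTower) (g h : ∀ n, List (T.V n)) : ∀ n, List (T.V n) :=
  fun n => reduce (lconcat (g n) (h n))

/-- Termwise reversal. -/
def seqInv (T : GraphTower) (g : ∀ n, List (T.V n)) : ∀ n, List (T.V n) :=
  fun n => (g n).reverse

/-- Membership in `←𝒢`: the stabilization of some locally eventually constant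
element of `G`. -/
def MemSG (T : GraphTower) (ω : ∀ n, List (T.V n)) : Prop :=
  ∃ g, T.MemG g ∧ T.LEC g ∧ T.IsStabilization g ω

/-- `τ = ω ∗ ξ`: termwise concatenation, followed by termwise reduction,
followed by stabilization. -/
def star (T : GraphTower) (ω ξ τ : ∀ n, List (T.V n)) : Prop :=
  T.IsStabilization (fun n => reduce (lconcat (ω n) (ξ n))) τ

end GraphTower

end GCG

/-!
Reduction of words (`u v u ↦ u`) terminates and is locally confluent, so reduced forms are unique
and `ω ↦ ω'` only depends on the reduction class of `ω`. The key point is that `φ_n` maps a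
reduction step of a loop word to a sequence of reduction steps: a backtrack `u v u` in `X_{n+1}`
becomes either a repeated letter, which compression removes, or a backtrack `c b c` along a
single subdivided edge of `X_n`, because every letter of `X*_n` that lies inside a subdivided
edge only sees the two ends of that edge. Hence `φ'_n(ω'_{n+1}) = φ_n(ω_{n+1})' = ω'_n`. For
fixed `n`, the projections of `ω'_{n+m}` to level `n` are reducts of `ω_n` that reduce to one
another as `m` decreases; their lengths are monotone and bounded, so they stabilize. Conversely,
the stabilization of a locally eventually constant `g ∈ G` is coherent, and each of its terms
reduces to `g_n` since `φ'` is compatible with reduction.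
-/

namespace GCG

section Reduction

variable {V : Type*}

lemma ReduceStep.length_lt {l r : List V} (h : ReduceStep l r) : r.length < l.length := by
  obtain ⟨p, s, u, v, rfl, rfl⟩ := h
  simp

lemma ReduceStep.cons (a : V) {l r : List V} (h : ReduceStep l r) :
    ReduceStep (a :: l) (a :: r) := by
  obtain ⟨p, s, u, v, rfl, rfl⟩ := h
  exact ⟨a :: p, s, u, v, rfl, rfl⟩

lemma exists_reflTransGen_isReduced (l : List V) :
    ∃ r, Relation.ReflTransGen ReduceStep l r ∧ IsReduced r := by
  by_cases hl : IsReduced l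
  · exact ⟨l, .refl, hl⟩
  · obtain ⟨r, hr⟩ : ∃ r, ReduceStep l r := by simpa [IsReduced] using hl
    have := hr.length_lt
    obtain ⟨r', hr', hred⟩ := exists_reflTransGen_isReduced r
    exact ⟨r', .head hr hr', hred⟩
termination_by l.length

lemma ReduceStep.join_of_nil_append_eq {p₂ s₁ s₂ : List V} {u₁ v₁ u₂ v₂ : V}
    (h : [u₁, v₁, u₁] ++ s₁ = p₂ ++ [u₂, v₂, u₂] ++ s₂) :
    ∃ w, Relation.ReflGen ReduceStep (u₁ :: s₁) w ∧
      Relation.ReflGen ReduceStep (p₂ ++ [u₂] ++ s₂) w := by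
  match p₂, h with
  | [], h =>
    simp only [List.cons_append, List.nil_append, List.cons.injEq] at h
    obtain ⟨rfl, rfl, -, rfl⟩ := h
    exact ⟨u₁ :: s₁, .refl, .refl⟩
  | [_], h =>
    simp only [List.cons_append, List.nil_append, List.cons.injEq] at h
    obtain ⟨rfl, rfl, rfl, rfl⟩ := h
    exact ⟨u₁ :: v₁ :: s₂, .refl, .refl⟩
  | [_, _], h =>
    simp only [List.cons_append, List.nil_append, List.cons.injEq] at h
    obtain ⟨rfl, rfl, rfl, rfl⟩ := h
    exact ⟨u₁ :: s₂, .single ⟨[], s₂, u₁, v₂, rfl, rfl⟩, .single ⟨[], s₂, u₁, v₁, rfl, rfl⟩⟩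
  | _ :: _ :: _ :: q, h =>
    simp only [List.cons_append, List.nil_append, List.cons.injEq] at h
    obtain ⟨rfl, rfl, rfl, rfl⟩ := h
    exact ⟨u₁ :: (q ++ [u₂] ++ s₂), .single ⟨u₁ :: q, s₂, u₂, v₂, by simp, by simp⟩,
      .single ⟨[], q ++ [u₂] ++ s₂, u₁, v₁, by simp, by simp⟩⟩

lemma ReduceStep.join_of_append_eq {p₁ s₁ p₂ s₂ : List V} {u₁ v₁ u₂ v₂ : V}
    (h : p₁ ++ [u₁, v₁, u₁] ++ s₁ = p₂ ++ [u₂, v₂, u₂] ++ s₂) :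
    ∃ w, Relation.ReflGen ReduceStep (p₁ ++ [u₁] ++ s₁) w ∧
      Relation.ReflGen ReduceStep (p₂ ++ [u₂] ++ s₂) w := by
  induction p₁ generalizing p₂ with
  | nil => exact join_of_nil_append_eq h
  | cons a p₁ ih =>
    match p₂, h with
    | [], h =>
      obtain ⟨w, h₁, h₂⟩ := join_of_nil_append_eq h.symm
      exact ⟨w, h₂, h₁⟩
    | b :: p₂, h =>
      simp only [List.cons_append, List.cons.injEq] at h
      obtain ⟨rfl, h⟩ := h
      obtain ⟨w, h₁, h₂⟩ := ih h
      have cons : ∀ {l r}, Relation.ReflGen ReduceStep l r →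
          Relation.ReflGen ReduceStep (a :: l) (a :: r) := fun
        | .refl => .refl
        | .single h => .single (h.cons a)
      exact ⟨a :: w, cons h₁, cons h₂⟩

lemma IsReduced.eq_of_reflTransGen {l r : List V} (hl : IsReduced l)
    (h : Relation.ReflTransGen ReduceStep l r) : r = l := by
  rcases h.cases_head with h | ⟨_, h, -⟩
  · exact h.symm
  · exact absurd h (hl _)

lemma eq_of_reflTransGen_of_isReduced {l r₁ r₂ : List V}
    (h₁ : Relation.ReflTransGen ReduceStep l r₁) (h₂ : Relation.ReflTransGen ReduceStep l r₂)
    (hr₁ : IsReduced r₁) (hr₂ : IsReduced r₂) : r₁ = r₂ := by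
  obtain ⟨w, hw₁, hw₂⟩ := Relation.church_rosser (fun _ _ _ ⟨p₁, s₁, u₁, v₁, hl, h₁⟩
    ⟨p₂, s₂, u₂, v₂, hl', h₂⟩ => by
      obtain ⟨w, hw₁, hw₂⟩ := ReduceStep.join_of_append_eq (hl.symm.trans hl')
      exact ⟨w, h₁ ▸ hw₁, h₂ ▸ hw₂.to_reflTransGen⟩) h₁ h₂
  rw [← hr₁.eq_of_reflTransGen hw₁, ← hr₂.eq_of_reflTransGen hw₂]

lemma reflTransGen_reduce (l : List V) : Relation.ReflTransGen ReduceStep l (reduce l) := by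
  rw [reduce, dif_pos (exists_reflTransGen_isReduced l)]
  exact (exists_reflTransGen_isReduced l).choose_spec.1

lemma isReduced_reduce (l : List V) : IsReduced (reduce l) := by
  rw [reduce, dif_pos (exists_reflTransGen_isReduced l)]
  exact (exists_reflTransGen_isReduced l).choose_spec.2

lemma reduce_eq_of_reflTransGen {l r : List V} (h : Relation.ReflTransGen ReduceStep l r) :
    reduce l = reduce r :=
  eq_of_reflTransGen_of_isReduced (reflTransGen_reduce l)
    (h.trans (reflTransGen_reduce r)) (isReduced_reduce l) (isReduced_reduce r)

lemma IsReduced.reduce_eq {l : List V} (h : IsReduced l) : reduce l = l :=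
  eq_of_reflTransGen_of_isReduced (reflTransGen_reduce l) .refl
    (isReduced_reduce l) h

lemma length_le_of_reflTransGen {l r : List V} (h : Relation.ReflTransGen ReduceStep l r) :
    r.length ≤ l.length := by
  induction h with
  | refl => rfl
  | tail _ h ih => exact h.length_lt.le.trans ih

lemma eq_of_reflTransGen_of_length_le {l r : List V} (h : Relation.ReflTransGen ReduceStep l r)
    (hlen : l.length ≤ r.length) : r = l := by
  rcases h.cases_head with h | ⟨_, h, h'⟩
  · exact h.symm
  · have := length_le_of_reflTransGen h'
    have := h.length_lt
    omega

lemma exists_forall_ge_eq_of_reflTransGen {l : List V} {a : ℕ → List V}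
    (hl : ∀ m, Relation.ReflTransGen ReduceStep l (a m))
    (ha : ∀ m, Relation.ReflTransGen ReduceStep (a (m + 1)) (a m)) :
    ∃ M, ∀ m, M ≤ m → a m = a M := by
  have hdesc : ∀ M m, M ≤ m → Relation.ReflTransGen ReduceStep (a m) (a M) := by
    intro M m hm
    induction m, hm using Nat.le_induction with
    | base => exact .refl
    | succ m _ ih => exact (ha m).trans ih
  obtain ⟨M, hM⟩ := WellFoundedLT.antitone_chain_condition (f := fun m => l.length - (a m).length)
    (antitone_nat_of_succ_le fun m => Nat.sub_le_sub_left (length_le_of_reflTransGen (ha m)) _)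
  refine ⟨M, fun m hm => (eq_of_reflTransGen_of_length_le (hdesc M m hm) ?_).symm⟩
  have := hM m hm
  have := length_le_of_reflTransGen (hl M)
  have := length_le_of_reflTransGen (hl m)
  omega

end Reduction

section LoopWord

variable {V : Type*}

lemma ReduceStep.map {W : Type*} (f : V → W) {l r : List V} (h : ReduceStep l r) :
    ReduceStep (l.map f) (r.map f) := by
  obtain ⟨p, s, u, v, rfl, rfl⟩ := h
  exact ⟨p.map f, s.map f, f u, f v, by simp, by simp⟩

lemma ReduceStep.isLoopWord {G : SimpleGraph V} {x : V} {l r : List V} (h : ReduceStep l r)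
    (hl : IsLoopWord G x l) : IsLoopWord G x r := by
  obtain ⟨p, s, u, v, rfl, rfl⟩ := h
  obtain ⟨hch, hhead, hlast⟩ := hl
  refine ⟨?_, by simpa [List.head?_append] using hhead, by simpa [List.getLast?_append] using hlast⟩
  exact (hch.infix (l₁ := p ++ [u]) ⟨[], [v, u] ++ s, by simp⟩).append_overlap
    (hch.infix (l₁ := [u] ++ s) ⟨p ++ [u, v], [], by simp⟩) (List.cons_ne_nil _ _)

lemma IsLoopWord.of_reflTransGen {G : SimpleGraph V} {x : V} {l r : List V}
    (hl : IsLoopWord G x l) (h : Relation.ReflTransGen ReduceStep l r) : IsLoopWord G x r := by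
  induction h with
  | refl => exact hl
  | tail _ h ih => exact h.isLoopWord ih

lemma IsLoopWord.reduce {G : SimpleGraph V} {x : V} {l : List V} (hl : IsLoopWord G x l) :
    IsLoopWord G x (reduce l) :=
  hl.of_reflTransGen (reflTransGen_reduce l)

end LoopWord

section Compress

variable {V : Type*}

lemma compress_cons (a : V) (l : List V) :
    compress (a :: l) = if l.head? = some a then compress l else a :: compress l := by
  cases l with
  | nil => simp [compress]
  | cons b l => simp [compress, eq_comm]

lemma head?_compress (l : List V) : (compress l).head? = l.head? := by
  induction l with
  | nil => rfl
  | cons a l ih =>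
    rw [compress_cons]
    split_ifs with h
    · rw [ih, h, List.head?_cons]
    · rfl

lemma exists_compress_cons_eq (a : V) (l : List V) : ∃ r, compress (a :: l) = a :: r := by
  have := head?_compress (a :: l)
  cases h : compress (a :: l) with
  | nil => simp [h] at this
  | cons b r => simp_all

lemma exists_compress_append_cons (X : List V) (c : V) :
    ∃ K, ∀ Z, compress (X ++ c :: Z) = K ++ compress (c :: Z) := by
  induction X with
  | nil => exact ⟨[], fun _ => rfl⟩
  | cons a X ih =>
    obtain ⟨K, hK⟩ := ih
    have hhead : ∀ Z, (X ++ c :: Z).head? = (X ++ [c]).head? := by cases X <;> simp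
    refine ⟨if (X ++ [c]).head? = some a then K else a :: K, fun Z => ?_⟩
    rw [List.cons_append, compress_cons, hhead, hK]
    split_ifs <;> rfl

lemma getLast?_compress (l : List V) : (compress l).getLast? = l.getLast? := by
  induction l using List.reverseRecOn with
  | nil => rfl
  | append_singleton X c =>
    obtain ⟨K, hK⟩ := exists_compress_append_cons X c
    rw [hK, show compress [c] = [c] from rfl]
    simp

lemma compress_append_cons_cons (X : List V) (a : V) (Y : List V) :
    compress (X ++ a :: a :: Y) = compress (X ++ a :: Y) := by
  obtain ⟨K, hK⟩ := exists_compress_append_cons X a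
  rw [hK, hK]
  simp [compress]

lemma isChain_compress {R : V → V → Prop} {l : List V}
    (h : l.IsChain fun a b => a = b ∨ R a b) : (compress l).IsChain R := by
  induction l with
  | nil => exact .nil
  | cons a l ih =>
    rw [List.isChain_cons] at h
    rw [compress_cons]
    split_ifs with hl
    · exact ih h.2
    · refine List.isChain_cons.2 ⟨fun b hb => ?_, ih h.2⟩
      rw [head?_compress] at hb
      exact (h.1 b hb).resolve_left fun hab => hl (hab ▸ hb)

lemma reflTransGen_compress_append_cons {X Y : List V} {b c₁ c₂ : V}
    (hX : X.getLast? = some c₁) (hY : Y.head? = some c₂) (h : c₁ = b ∨ c₂ = b ∨ c₁ = c₂) :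
    Relation.ReflTransGen ReduceStep (compress (X ++ b :: Y)) (compress (X ++ Y)) := by
  obtain ⟨X, rfl⟩ := List.getLast?_eq_some_iff.1 hX
  obtain ⟨Y, rfl⟩ := List.head?_eq_some_iff.1 hY
  simp only [List.append_assoc, List.cons_append, List.nil_append]
  rcases h with rfl | rfl | rfl
  · rw [compress_append_cons_cons]
  · have := compress_append_cons_cons (X ++ [c₁]) c₂ Y
    simp only [List.append_assoc, List.cons_append, List.nil_append] at this
    rw [this]
  · by_cases hb : c₁ = b
    · subst hb
      rw [compress_append_cons_cons]
    obtain ⟨K, hK⟩ := exists_compress_append_cons X c₁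
    obtain ⟨r, hr⟩ := exists_compress_cons_eq c₁ Y
    refine .single ⟨K, r, c₁, b, ?_, ?_⟩
    · rw [hK, compress_cons, if_neg (by simpa using Ne.symm hb), compress_cons,
        if_neg (by simpa using hb), hr]
      simp
    · rw [compress_append_cons_cons, hK, hr]
      simp

end Compress

section Subdivision

variable {V S : Type*}

/-- `edge t` is the edge of `G` whose subdivision passes through the new vertex `t`. -/
structure SubdivisionLabelling (G : SimpleGraph V) (Gs : SimpleGraph (V ⊕ S)) where
  edge : S → Sym2 V
  edge_mem_edgeSet : ∀ t, edge t ∈ G.edgeSet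
  not_adj_inl_inl : ∀ a b, ¬ Gs.Adj (.inl a) (.inl b)
  mem_edge_of_adj : ∀ {t b}, Gs.Adj (.inr t) (.inl b) → b ∈ edge t
  edge_eq_of_adj : ∀ {t t'}, Gs.Adj (.inr t) (.inr t') → edge t' = edge t

lemma IsEvenSubdivision.nonempty_subdivisionLabelling {G : SimpleGraph V} {d : ℕ}
    {Gs : SimpleGraph (V ⊕ S)} (h : IsEvenSubdivision G d Gs) (hd : 2 ≤ d) :
    Nonempty (SubdivisionLabelling G Gs) := by
  obtain ⟨P, h0, hlast, hint, -, -, hcover, huniq, hadj⟩ := h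
  have pos_of_inl : ∀ e i a, P e i = .inl a → i.val = 0 ∨ i.val = d := by
    intro e i a hi
    by_contra! hne
    obtain ⟨t, ht⟩ :=
      hint e i (Nat.pos_of_ne_zero hne.1) (lt_of_le_of_ne (Nat.lt_succ_iff.1 i.2) hne.2)
    simp [hi] at ht
  have pos_of_inr : ∀ e i t, P e i = .inr t → 0 < i.val ∧ i.val < d := by
    intro e i t hi
    refine ⟨Nat.pos_of_ne_zero fun h => ?_, lt_of_le_of_ne (Nat.lt_succ_iff.1 i.2) fun h => ?_⟩
    · simp [show i = 0 from Fin.ext h, h0] at hi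
    · simp [show i = Fin.last d from Fin.ext h, hlast] at hi
  choose e i he using hcover
  -- an interior point of a subdivided edge determines that edge up to reversal
  have edge_eq : ∀ e' j t, P e' j = .inr t → (e t).edge = e'.edge := by
    intro e' j t hj
    obtain ⟨hj₀, hjd⟩ := pos_of_inr e' j t hj
    rcases huniq e' (e t) j (i t) hj₀ hjd (hj.trans (he t).symm) with ⟨h, -⟩ | ⟨h, -⟩
    · rw [h]
    · rw [h, SimpleGraph.Dart.edge_symm]
  refine ⟨⟨fun t => (e t).edge, fun t => (e t).edge_mem, ?_, ?_, ?_⟩⟩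
  · rintro a b hab
    obtain ⟨e', j, ha, hb⟩ := (hadj _ _).1 hab
    have := pos_of_inl _ _ _ ha
    have := pos_of_inl _ _ _ hb
    simp only [Fin.val_castSucc, Fin.val_succ] at *
    omega
  · intro t b htb
    obtain ⟨e', j, ht, hb⟩ := (hadj _ _).1 htb
    have hj : j.succ = Fin.last d := by
      have := pos_of_inl _ _ _ hb
      simp only [Fin.val_succ] at this
      exact Fin.ext (by simp only [Fin.val_succ, Fin.val_last]; omega)
    rw [hj, hlast, Sum.inl.injEq] at hb
    rw [edge_eq _ _ _ ht, SimpleGraph.Dart.edge, ← hb]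
    exact Sym2.mem_mk_right _ _
  · intro t t' htt'
    obtain ⟨e', j, ht, ht'⟩ := (hadj _ _).1 htt'
    rw [edge_eq _ _ _ ht, edge_eq _ _ _ ht']

lemma exists_head?_filterMap_getLeft? {l : List (V ⊕ S)} {x : V} (hx : .inl x ∈ l) :
    ∃ c, (l.filterMap Sum.getLeft?).head? = some c :=
  Option.ne_none_iff_exists'.1 fun h => by
    rw [List.head?_eq_none_iff, List.filterMap_eq_nil_iff] at h
    simpa using h _ hx

lemma _root_.Sym2.eq_or_eq_or_eq_of_mem {α : Type*} {z : Sym2 α} {a b c : α} (ha : a ∈ z)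
    (hb : b ∈ z) (hc : c ∈ z) : a = c ∨ b = c ∨ a = b := by
  induction z using Sym2.ind with
  | h x y =>
    rw [Sym2.mem_iff] at ha hb hc
    rcases ha with rfl | rfl <;> rcases hb with rfl | rfl <;> rcases hc with rfl | rfl <;> simp

namespace SubdivisionLabelling

variable {G : SimpleGraph V} {Gs : SimpleGraph (V ⊕ S)} (L : SubdivisionLabelling G Gs)

lemma eq_or_adj_of_mem_edge {t : S} {a b : V} (ha : a ∈ L.edge t) (hb : b ∈ L.edge t) :
    a = b ∨ G.Adj a b := by
  have := L.edge_mem_edgeSet t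
  induction h : L.edge t using Sym2.ind with
  | h x y =>
    rw [h] at ha hb this
    rw [Sym2.mem_iff] at ha hb
    rw [SimpleGraph.mem_edgeSet] at this
    rcases ha with rfl | rfl <;> rcases hb with rfl | rfl
    all_goals first | exact .inl rfl | exact .inr this | exact .inr this.symm

lemma mem_edge_of_mem_head? {t : S} {y : List (V ⊕ S)} (hy : (.inr t :: y).IsChain Gs.Adj)
    {b : V} (hb : b ∈ (y.filterMap Sum.getLeft?).head?) : b ∈ L.edge t := by
  induction y generalizing t with
  | nil => simp at hb
  | cons z y ih =>
    obtain ⟨hz, hy⟩ := List.isChain_cons_cons.1 hy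
    cases z with
    | inl a =>
      obtain rfl : a = b := by simpa using hb
      exact L.mem_edge_of_adj hz
    | inr t' =>
      rw [← L.edge_eq_of_adj hz]
      exact ih hy (by simpa only [List.filterMap_cons, Sum.getLeft?_inr] using hb)

include L in
lemma isChain_filterMap_getLeft? {y : List (V ⊕ S)} (hy : y.IsChain Gs.Adj) :
    (y.filterMap Sum.getLeft?).IsChain fun a b => a = b ∨ G.Adj a b := by
  induction y with
  | nil => exact .nil
  | cons z y ih =>
    have ih := ih hy.tail
    cases z with
    | inr t => simpa only [List.filterMap_cons, Sum.getLeft?_inr] using ih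
    | inl a =>
      refine List.isChain_cons.2 ⟨fun b hb => ?_, by simpa using ih⟩
      cases y with
      | nil => simp at hb
      | cons z y =>
        obtain ⟨hz, hy⟩ := List.isChain_cons_cons.1 hy
        cases z with
        | inl a' => exact absurd hz (L.not_adj_inl_inl a a')
        | inr t =>
          exact L.eq_or_adj_of_mem_edge (L.mem_edge_of_adj hz.symm)
            (L.mem_edge_of_mem_head? hy
              (by simpa only [List.filterMap_cons, Sum.getLeft?_inr, Sum.getLeft?_inl] using hb))

include L in
lemma isChain_drc {y : List (V ⊕ S)} (hy : y.IsChain Gs.Adj) : (DRC id y).IsChain G.Adj :=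
  isChain_compress (L.isChain_filterMap_getLeft? hy)

include L in
lemma reflTransGen_drc_inr_inl_inr {p s : List (V ⊕ S)} {t : S} {c : V}
    (hy : (p ++ [.inr t, .inl c, .inr t] ++ s : List (V ⊕ S)).IsChain Gs.Adj) {x₁ x₂ : V}
    (hp : .inl x₁ ∈ p) (hs : .inl x₂ ∈ s) :
    Relation.ReflTransGen ReduceStep (DRC id (p ++ [.inr t, .inl c, .inr t] ++ s))
      (DRC id (p ++ [.inr t] ++ s)) := by
  -- The nearest original vertices `c₁` before and `c₂` after the backtrack, and `c`, are all ends
  -- of the edge of `t`; so two of them agree.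
  obtain ⟨c₁, hc₁⟩ := exists_head?_filterMap_getLeft? (List.mem_reverse.2 hp)
  obtain ⟨c₂, hc₂⟩ := exists_head?_filterMap_getLeft? hs
  rw [List.filterMap_reverse, List.head?_reverse] at hc₁
  have hpt : (.inr t :: p.reverse).IsChain Gs.Adj := by
    have := hy.infix (l₁ := p ++ [.inr t]) ⟨[], [.inl c, .inr t] ++ s, by simp⟩
    simpa using List.isChain_reverse.2 (this.imp fun _ _ h => h.symm)
  have hts : (.inr t :: s).IsChain Gs.Adj :=
    hy.infix (l₁ := .inr t :: s) ⟨p ++ [.inr t, .inl c], [], by simp⟩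
  have htc : Gs.Adj (.inr t) (.inl c) := by
    have := hy.infix (l₁ := [.inr t, .inl c]) ⟨p, .inr t :: s, by simp⟩
    simpa using this
  have mem₁ :=
    L.mem_edge_of_mem_head? hpt (by rw [List.filterMap_reverse, List.head?_reverse, hc₁]; rfl)
  have mem₂ := L.mem_edge_of_mem_head? hts (by rw [hc₂]; rfl)
  simp only [DRC, id, List.filterMap_append, List.filterMap_cons, Sum.getLeft?_inl,
    Sum.getLeft?_inr, List.filterMap_nil, List.append_nil, List.append_assoc,
    List.singleton_append]
  exact reflTransGen_compress_append_cons hc₁ hc₂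
    (Sym2.eq_or_eq_or_eq_of_mem mem₁ mem₂ (L.mem_edge_of_adj htc))

include L in
lemma reflTransGen_drc_of_reduceStep {y y' : List (V ⊕ S)} (hy : y.IsChain Gs.Adj)
    {x₁ x₂ : V} (hhead : y.head? = some (.inl x₁)) (hlast : y.getLast? = some (.inl x₂))
    (h : ReduceStep y y') : Relation.ReflTransGen ReduceStep (DRC id y) (DRC id y') := by
  obtain ⟨p, s, a, b, rfl, rfl⟩ := h
  have hab : Gs.Adj a b := by
    simpa using hy.infix (l₁ := [a, b]) ⟨p, a :: s, by simp⟩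
  rcases a with a | t <;> rcases b with b | t'
  · exact absurd hab (L.not_adj_inl_inl a b)
  · simp only [DRC, id, List.filterMap_append, List.filterMap_cons, Sum.getLeft?_inl,
      Sum.getLeft?_inr, List.filterMap_nil, List.append_assoc, List.cons_append, List.nil_append]
    rw [compress_append_cons_cons]
  · have hp : .inl x₁ ∈ p := by
      cases p with
      | nil => simp at hhead
      | cons z p => simp_all
    have hs : .inl x₂ ∈ s := by
      rcases hsl : s.getLast? with _ | z
      · rw [List.getLast?_eq_none_iff] at hsl
        simp [hsl] at hlast
      · simp only [List.getLast?_append, hsl, Option.some_or, Option.some.injEq] at hlast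
        exact hlast ▸ List.mem_of_getLast? hsl
    exact L.reflTransGen_drc_inr_inl_inr hy hp hs
  · simp only [DRC, id, List.filterMap_append, List.filterMap_cons, Sum.getLeft?_inr,
      List.filterMap_nil]
    rfl

end SubdivisionLabelling

end Subdivision

namespace GraphTower

variable (T : GraphTower)

noncomputable def labelling (n : ℕ) : SubdivisionLabelling (T.G n) (T.Gs n) :=
  ((T.subdiv n).nonempty_subdivisionLabelling (T.two_le_d n)).some

lemma phi_eq_drc_map (n : ℕ) (w : List (T.V (n + 1))) : T.phi n w = DRC id (w.map (T.f n)) := by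
  simp only [phi, DRC, List.filterMap_map]
  rfl

variable {T}

lemma isChain_map_f {n : ℕ} {w : List (T.V (n + 1))} (hw : w.IsChain (T.G (n + 1)).Adj) :
    (w.map (T.f n)).IsChain (T.Gs n).Adj :=
  (List.isChain_map _).2 (hw.imp fun _ _ => (T.f_simplicial n ·))

lemma phi_isLoopWord {n : ℕ} {w : List (T.V (n + 1))}
    (hw : IsLoopWord (T.G (n + 1)) (T.x (n + 1)) w) : IsLoopWord (T.G n) (T.x n) (T.phi n w) := by
  obtain ⟨hch, hhead, hlast⟩ := hw
  rw [phi_eq_drc_map]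
  refine ⟨(T.labelling n).isChain_drc (isChain_map_f hch), ?_, ?_⟩
  · obtain ⟨w, rfl⟩ := List.head?_eq_some_iff.1 hhead
    simp [DRC, head?_compress, T.f_base]
  · obtain ⟨w, rfl⟩ := List.getLast?_eq_some_iff.1 hlast
    simp [DRC, getLast?_compress, T.f_base]

lemma phi_reflTransGen_of_reduceStep {n : ℕ} {w w' : List (T.V (n + 1))}
    (hw : IsLoopWord (T.G (n + 1)) (T.x (n + 1)) w) (h : ReduceStep w w') :
    Relation.ReflTransGen ReduceStep (T.phi n w) (T.phi n w') := by
  obtain ⟨hch, hhead, hlast⟩ := hw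
  rw [phi_eq_drc_map, phi_eq_drc_map]
  exact (T.labelling n).reflTransGen_drc_of_reduceStep (isChain_map_f hch)
    (by rw [List.head?_map, hhead, Option.map_some, T.f_base])
    (by rw [List.getLast?_map, hlast, Option.map_some, T.f_base]) (h.map _)

lemma phi_reflTransGen {n : ℕ} {w w' : List (T.V (n + 1))}
    (hw : IsLoopWord (T.G (n + 1)) (T.x (n + 1)) w) (h : Relation.ReflTransGen ReduceStep w w') :
    Relation.ReflTransGen ReduceStep (T.phi n w) (T.phi n w') := by
  induction h with
  | refl => exact .refl
  | tail h₁ h₂ ih => exact ih.trans (phi_reflTransGen_of_reduceStep (hw.of_reflTransGen h₁) h₂)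

lemma proj_isLoopWord (n : ℕ) {m : ℕ} {w : List (T.V (n + m))}
    (hw : IsLoopWord (T.G (n + m)) (T.x (n + m)) w) :
    IsLoopWord (T.G n) (T.x n) (T.proj n m w) := by
  induction m with
  | zero => exact hw
  | succ m ih => exact ih (phi_isLoopWord hw)

lemma proj_reflTransGen (n : ℕ) {m : ℕ} {w w' : List (T.V (n + m))}
    (hw : IsLoopWord (T.G (n + m)) (T.x (n + m)) w) (h : Relation.ReflTransGen ReduceStep w w') :
    Relation.ReflTransGen ReduceStep (T.proj n m w) (T.proj n m w') := by
  induction m with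
  | zero => exact h
  | succ m ih => exact ih (phi_isLoopWord hw) (phi_reflTransGen hw h)

lemma proj_succ (g : ∀ k, List (T.V k)) (n m : ℕ) :
    T.proj n (m + 1) (g (n + (m + 1))) = T.phi n (T.proj (n + 1) m (g (n + 1 + m))) := by
  induction m generalizing g with
  | zero => rfl
  | succ m ih => exact ih fun k => T.phi k (g (k + 1))

section Coherent

variable {g : ∀ k, List (T.V k)} (hg : ∀ k, IsLoopWord (T.G k) (T.x k) (g k))
  (hφ : ∀ k, Relation.ReflTransGen ReduceStep (T.phi k (g (k + 1))) (g k))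
include hg hφ

lemma reflTransGen_proj_succ (n m : ℕ) :
    Relation.ReflTransGen ReduceStep (T.proj n (m + 1) (g (n + (m + 1))))
      (T.proj n m (g (n + m))) :=
  proj_reflTransGen n (phi_isLoopWord (hg _)) (hφ (n + m))

lemma reduce_proj (n m : ℕ) : reduce (T.proj n m (g (n + m))) = reduce (g n) := by
  induction m with
  | zero => rfl
  | succ m ih => rw [reduce_eq_of_reflTransGen (reflTransGen_proj_succ hg hφ n m), ih]

end Coherent

lemma MemOmega.proj_eq {ω : ∀ k, List (T.V k)} (hω : T.MemOmega ω) (n m : ℕ) :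
    T.proj n m (ω (n + m)) = ω n := by
  induction m with
  | zero => rfl
  | succ m ih => exact (congrArg (T.proj n m) (hω.2 (n + m))).trans ih

lemma MemOmega.reflTransGen_phi_reduce {ω : ∀ k, List (T.V k)} (hω : T.MemOmega ω) (k : ℕ) :
    Relation.ReflTransGen ReduceStep (T.phi k (reduce (ω (k + 1)))) (reduce (ω k)) := by
  have h : Relation.ReflTransGen ReduceStep (ω k) (T.phi k (reduce (ω (k + 1)))) :=
    hω.2 k ▸ phi_reflTransGen (hω.1 (k + 1)) (reflTransGen_reduce _)
  rw [reduce_eq_of_reflTransGen h]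
  exact reflTransGen_reduce _

lemma MemOmega.memG_reduce {ω : ∀ k, List (T.V k)} (hω : T.MemOmega ω) :
    T.MemG fun n => reduce (ω n) :=
  ⟨fun n => ⟨(hω.1 n).reduce, isReduced_reduce _⟩, fun n =>
    (reduce_eq_of_reflTransGen (hω.reflTransGen_phi_reduce n)).trans (isReduced_reduce _).reduce_eq⟩

/-- The projections of `ω'_{n+m}` to level `n` form a chain `⋯ →* a₂ →* a₁ →* a₀` of reducts
of `ω_n`, so their lengths increase and are bounded by that of `ω_n`. -/
lemma MemOmega.lec_reduce {ω : ∀ k, List (T.V k)} (hω : T.MemOmega ω) :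
    T.LEC fun n => reduce (ω n) := fun n =>
  exists_forall_ge_eq_of_reflTransGen
    (fun m => hω.proj_eq n m ▸ proj_reflTransGen n (hω.1 _) (reflTransGen_reduce _))
    (reflTransGen_proj_succ (fun k => (hω.1 k).reduce) hω.reflTransGen_phi_reduce n)

lemma MemG.reflTransGen_phi {g : ∀ k, List (T.V k)} (hg : T.MemG g) (k : ℕ) :
    Relation.ReflTransGen ReduceStep (T.phi k (g (k + 1))) (g k) :=
  hg.2 k ▸ reflTransGen_reduce _

/-- The witness is the stabilization `←g`. -/
lemma MemG.exists_memOmega_reduce_eq {g : ∀ k, List (T.V k)} (hg : T.MemG g) (hlec : T.LEC g) :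
    ∃ ω, T.MemOmega ω ∧ ∀ n, reduce (ω n) = g n := by
  choose M hM using hlec
  have hloop k := (hg.1 k).1
  refine ⟨fun n => T.proj n (M n) (g (n + M n)),
    ⟨fun n => proj_isLoopWord n (hloop _), fun n => ?_⟩,
    fun n => (reduce_proj hloop hg.reflTransGen_phi n (M n)).trans (hg.1 n).2.reduce_eq⟩
  set m := max (M (n + 1)) (M n)
  dsimp only
  rw [← hM (n + 1) m (le_max_left _ _), ← proj_succ, hM n (m + 1) (by omega)]

end GraphTower

/-- `Ω' = 𝒢`. Termwise reduction of any `(ω_n)_n ∈ Ω` lies in `G`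
and is locally eventually constant; conversely every locally eventually constant
`(g_n)_n ∈ G` is the termwise reduction of some `(ω_n)_n ∈ Ω`. -/
theorem statement_3 (T : GraphTower) :
    (∀ ω, T.MemOmega ω →
      T.MemG (fun n => reduce (ω n)) ∧ T.LEC (fun n => reduce (ω n))) ∧
    (∀ g, T.MemG g → T.LEC g →
      ∃ ω, T.MemOmega ω ∧ ∀ n, reduce (ω n) = g n) :=
  ⟨fun _ hω => ⟨hω.memG_reduce, hω.lec_reduce⟩, fun _ hg hlec => hg.exists_memOmega_reduce_eq hlec⟩

end GCG
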